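/- Let M(y_1,...,y_7) be the basis-generating polynomial of the matroid F_7^{−4} (the Fano matroid with four of its seven three-point lines relaxed). Then ΔM{1,2} = ½(y₃y₇+y₅y₇+y₄y₅+y₃y₄+y₃y₅+y₃y₆+y₆y₇+y₄y₆)² + ½(y₃y₇+y₃y₄+y₃y₆+y₃y₅)² + ½(y₄y₆−y₅y₇)² + ½(y₆y₇−y₄y₅)², and consequently ΔM{1,2}(y) ≥ 0 for all real y. -/
import Mathlib


open MvPolynomial

/-- The deletion `Z^e`: the polynomial `Z` with `y_e` set to `0`. -/
noncomputable def del {m : ℕ} (e : Fin m) (Z : MvPolynomial (Fin m) ℝ) : MvPolynomial (Fin m) ℝ :=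
  aeval (fun i => if i = e then (0 : MvPolynomial (Fin m) ℝ) else X i) Z

/-- Multiaffine: every variable occurs to at most the first power. -/
def Multiaffine {m : ℕ} (Z : MvPolynomial (Fin m) ℝ) : Prop :=
  ∀ e : Fin m, Z.degreeOf e ≤ 1


/-- The basis-generating polynomial of `F_7^{-4}`: the rank-3 matroid on
`{1,...,7}` (elements `1,...,7` encoded as `0,...,6 : Fin 7`) whose non-bases are
the three lines `{1,2,3}`, `{1,4,7}`, `{1,5,6}`. -/
noncomputable def MF74 : MvPolynomial (Fin 7) ℝ :=
  ∑ B ∈ (Finset.univ : Finset (Fin 7)).powersetCard 3 \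
      ({ {0,1,2}, {0,3,6}, {0,4,5} } : Finset (Finset (Fin 7))),
    ∏ e ∈ B, X e

lemma MF74_eq : MF74 = X 0 * X 1 * X 3 + X 0 * X 1 * X 4 + X 0 * X 1 * X 5 + X 0 * X 1 * X 6 + X 0 * X 2 * X 3 + X 0 * X 2 * X 4 + X 0 * X 2 * X 5 + X 0 * X 2 * X 6 + X 0 * X 3 * X 4 + X 0 * X 3 * X 5 + X 0 * X 4 * X 6 + X 0 * X 5 * X 6 + X 1 * X 2 * X 3 + X 1 * X 2 * X 4 + X 1 * X 2 * X 5 + X 1 * X 2 * X 6 + X 1 * X 3 * X 4 + X 1 * X 3 * X 5 + X 1 * X 3 * X 6 + X 1 * X 4 * X 5 + X 1 * X 4 * X 6 + X 1 * X 5 * X 6 + X 2 * X 3 * X 4 + X 2 * X 3 * X 5 + X 2 * X 3 * X 6 + X 2 * X 4 * X 5 + X 2 * X 4 * X 6 + X 2 * X 5 * X 6 + X 3 * X 4 * X 5 + X 3 * X 4 * X 6 + X 3 * X 5 * X 6 + X 4 * X 5 * X 6 := by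
  rw [MF74, show (Finset.univ : Finset (Fin 7)).powersetCard 3 \
      ({ {0,1,2}, {0,3,6}, {0,4,5} } : Finset (Finset (Fin 7))) =
      ({ {0,1,3}, {0,1,4}, {0,1,5}, {0,1,6}, {0,2,3}, {0,2,4}, {0,2,5}, {0,2,6}, {0,3,4}, {0,3,5}, {0,4,6}, {0,5,6}, {1,2,3}, {1,2,4}, {1,2,5}, {1,2,6}, {1,3,4}, {1,3,5}, {1,3,6}, {1,4,5}, {1,4,6}, {1,5,6}, {2,3,4}, {2,3,5}, {2,3,6}, {2,4,5}, {2,4,6}, {2,5,6}, {3,4,5}, {3,4,6}, {3,5,6}, {4,5,6}} : Finset (Finset (Fin 7))) from by decide]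
  simp (config := { decide := true }) only [Finset.sum_insert, Finset.mem_insert, Finset.mem_singleton, Finset.sum_singleton,
    Finset.prod_insert, Finset.prod_singleton]
  ring

lemma d0_eq : pderiv 0 MF74 = X 1 * X 3 + X 1 * X 4 + X 1 * X 5 + X 1 * X 6 + X 2 * X 3 + X 2 * X 4 + X 2 * X 5 + X 2 * X 6 + X 3 * X 4 + X 3 * X 5 + X 4 * X 6 + X 5 * X 6 := by
  rw [MF74_eq]
  simp (config := { decide := true }) only [map_add, pderiv_mul, pderiv_X, Pi.single_apply, if_true, if_false, mul_one, mul_zero, one_mul, zero_mul, add_zero, zero_add]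

lemma d1_eq : pderiv 1 MF74 = X 0 * X 3 + X 0 * X 4 + X 0 * X 5 + X 0 * X 6 + X 2 * X 3 + X 2 * X 4 + X 2 * X 5 + X 2 * X 6 + X 3 * X 4 + X 3 * X 5 + X 3 * X 6 + X 4 * X 5 + X 4 * X 6 + X 5 * X 6 := by
  rw [MF74_eq]
  simp (config := { decide := true }) only [map_add, pderiv_mul, pderiv_X, Pi.single_apply, if_true, if_false, mul_one, mul_zero, one_mul, zero_mul, add_zero, zero_add]

lemma d01_eq : pderiv 1 (pderiv 0 MF74) = X 3 + X 4 + X 5 + X 6 := by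
  rw [d0_eq]
  simp (config := { decide := true }) only [map_add, pderiv_mul, pderiv_X, Pi.single_apply, if_true, if_false, mul_one, mul_zero, one_mul, zero_mul, add_zero, zero_add]

lemma main_id :
    pderiv 0 MF74 * pderiv 1 MF74 - pderiv 1 (pderiv 0 MF74) * MF74 =
      C (1/2 : ℝ) * (X 2 * X 6 + X 4 * X 6 + X 3 * X 4 + X 2 * X 3 + X 2 * X 4 + X 2 * X 5 + X 5 * X 6 + X 3 * X 5) ^ 2
      + C (1/2 : ℝ) * (X 2 * X 6 + X 2 * X 3 + X 2 * X 5 + X 2 * X 4) ^ 2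
      + C (1/2 : ℝ) * (X 3 * X 5 - X 4 * X 6) ^ 2
      + C (1/2 : ℝ) * (X 5 * X 6 - X 3 * X 4) ^ 2 := by
  rw [d01_eq, d0_eq, d1_eq, MF74_eq]
  have h : (C (1/2 : ℝ) : MvPolynomial (Fin 7) ℝ) * 2 = 1 := by
    rw [show (2 : MvPolynomial (Fin 7) ℝ) = C 2 from (map_ofNat C 2).symm, ← C_mul]
    norm_num
  linear_combination (-(((X 1 * X 3 + X 1 * X 4 + X 1 * X 5 + X 1 * X 6 + X 2 * X 3 + X 2 * X 4 + X 2 * X 5 + X 2 * X 6 + X 3 * X 4 + X 3 * X 5 + X 4 * X 6 + X 5 * X 6) * (X 0 * X 3 + X 0 * X 4 + X 0 * X 5 + X 0 * X 6 + X 2 * X 3 + X 2 * X 4 + X 2 * X 5 + X 2 * X 6 + X 3 * X 4 + X 3 * X 5 + X 3 * X 6 + X 4 * X 5 + X 4 * X 6 + X 5 * X 6) - (X 3 + X 4 + X 5 + X 6) * (X 0 * X 1 * X 3 + X 0 * X 1 * X 4 + X 0 * X 1 * X 5 + X 0 * X 1 * X 6 + X 0 * X 2 * X 3 + X 0 * X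 2 * X 4 + X 0 * X 2 * X 5 + X 0 * X 2 * X 6 + X 0 * X 3 * X 4 + X 0 * X 3 * X 5 + X 0 * X 4 * X 6 + X 0 * X 5 * X 6 + X 1 * X 2 * X 3 + X 1 * X 2 * X 4 + X 1 * X 2 * X 5 + X 1 * X 2 * X 6 + X 1 * X 3 * X 4 + X 1 * X 3 * X 5 + X 1 * X 3 * X 6 + X 1 * X 4 * X 5 + X 1 * X 4 * X 6 + X 1 * X 5 * X 6 + X 2 * X 3 * X 4 + X 2 * X 3 * X 5 + X 2 * X 3 * X 6 + X 2 * X 4 * X 5 + X 2 * X 4 * X 6 + X 2 * X 5 * X 6 + X 3 * X 4 * X 5 + X 3 * X 4 * X 6 + X 3 * X 5 * X 6 + X 4 * X 5 * X 6)))) * h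

theorem F74_rayleigh_sos :
    (pderiv 0 MF74 * pderiv 1 MF74 - pderiv 1 (pderiv 0 MF74) * MF74 =
      C (1/2 : ℝ) * (X 2 * X 6 + X 4 * X 6 + X 3 * X 4 + X 2 * X 3 + X 2 * X 4 + X 2 * X 5 + X 5 * X 6 + X 3 * X 5) ^ 2
      + C (1/2 : ℝ) * (X 2 * X 6 + X 2 * X 3 + X 2 * X 5 + X 2 * X 4) ^ 2
      + C (1/2 : ℝ) * (X 3 * X 5 - X 4 * X 6) ^ 2
      + C (1/2 : ℝ) * (X 5 * X 6 - X 3 * X 4) ^ 2) ∧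
    ∀ y : Fin 7 → ℝ,
      0 ≤ eval y (pderiv 0 MF74 * pderiv 1 MF74 - pderiv 1 (pderiv 0 MF74) * MF74) := by
  refine ⟨main_id, fun y => ?_⟩
  rw [main_id]
  simp only [map_add, eval_mul, eval_pow, eval_sub, eval_add, eval_C, eval_X]
  positivity
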